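/- arXiv:2412.16710 — 2 statements merged into one kernel-verified Lean document; each statement's English description precedes it below -/
import Mathlib

section
/- Let T > 0, β > 0 and α ≥ β/T, and let u(t) = e^{−αt} − e^{−α(T−t)} be the antisymmetric mode. Then ∫₀^T u′(t)² dt ≤ α² · (sinh β + β)/(sinh β − β) · ∫₀^T u(t)² dt, where u′ denotes the derivative of u. -/
open Real Set

/-!
With `x = αT`, both energies are elementary integrals of exponentials:
`∫ u² = 2 e^{-x} (sinh x - x) / α` and `∫ u'² = 2 α e^{-x} (sinh x + x)`,
so their ratio is exactly `α² (sinh x + x) / (sinh x - x)`. This ratio decreases in `x > 0`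
because `sinh x / x` increases (the secant slopes from `0` of the convex function `sinh`),
so it is at most its value at `β ≤ x`.
-/

theorem convexOn_sinh_Ici : ConvexOn ℝ (Ici 0) sinh := by
  refine MonotoneOn.convexOn_of_deriv (convex_Ici 0) continuous_sinh.continuousOn
    differentiable_sinh.differentiableOn ?_
  rw [Real.deriv_sinh, interior_Ici]
  intro x hx y hy hxy
  exact cosh_le_cosh.2 (by rwa [abs_of_pos hx, abs_of_pos hy])

theorem sinh_div_self_monotoneOn : MonotoneOn (fun x => sinh x / x) (Ioi 0) := by
  intro x hx y hy hxy
  simpa using convexOn_sinh_Ici.secant_mono (a := 0) self_mem_Ici (mem_Ici.2 hx.le)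
    (mem_Ici.2 hy.le) hx.ne' hy.ne' hxy

theorem sinh_add_self_div_sinh_sub_self_antitoneOn :
    AntitoneOn (fun x => (sinh x + x) / (sinh x - x)) (Ioi 0) := by
  intro x hx y hy hxy
  have hx' : 0 < sinh x - x := sub_pos.2 (self_lt_sinh_iff.2 hx)
  have hy' : 0 < sinh y - y := sub_pos.2 (self_lt_sinh_iff.2 hy)
  have hslope : sinh x * y ≤ sinh y * x :=
    (div_le_div_iff₀ hx hy).1 (sinh_div_self_monotoneOn hx hy hxy)
  rw [div_le_div_iff₀ hy' hx']
  linear_combination 2 * hslope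

theorem sinh_sub_self_ne_zero {x : ℝ} (hx : x ≠ 0) : sinh x - x ≠ 0 := fun h =>
  hx (sinh_sub_id_strictMono.injective (by simpa using h))

theorem integral_exp_mul {a b k : ℝ} (hk : k ≠ 0) :
    ∫ t in a..b, exp (k * t) = (exp (k * b) - exp (k * a)) / k := by
  rw [intervalIntegral.integral_comp_mul_left (fun t => exp t) hk, integral_exp, smul_eq_mul,
    inv_mul_eq_div]

noncomputable def antisymmetricMode (α T t : ℝ) : ℝ := exp (-α * t) - exp (-α * (T - t))

theorem hasDerivAt_antisymmetricMode (α T t : ℝ) :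
    HasDerivAt (antisymmetricMode α T) (-α * (exp (-α * t) + exp (-α * (T - t)))) t := by
  have h := (((hasDerivAt_id t).const_mul (-α)).exp).sub
    ((((hasDerivAt_id t).const_sub T).const_mul (-α)).exp)
  exact h.congr_deriv (by simp only [id]; ring)

/-- With `c = -1` this is the energy of the mode; with `c = 1`, up to the factor `α²`, that of its
derivative. -/
theorem integral_exp_add_mul_exp_sq {α : ℝ} (hα : α ≠ 0) (T c : ℝ) :
    ∫ t in (0:ℝ)..T, (exp (-α * t) + c * exp (-α * (T - t))) ^ 2
      = exp (-α * T) * ((1 + c ^ 2) * sinh (α * T) + 2 * c * (α * T)) / α := by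
  have hsq : ∀ t, (exp (-α * t) + c * exp (-α * (T - t))) ^ 2
      = exp (-2 * α * t) + c ^ 2 * exp (-2 * α * T) * exp (2 * α * t)
        + 2 * c * exp (-α * T) := by
    intro t
    have h1 : exp (-α * t) ^ 2 = exp (-2 * α * t) := by rw [sq, ← exp_add]; ring_nf
    have h2 : exp (-α * (T - t)) ^ 2 = exp (-2 * α * T) * exp (2 * α * t) := by
      rw [sq, ← exp_add, ← exp_add]; ring_nf
    have h3 : exp (-α * t) * exp (-α * (T - t)) = exp (-α * T) := by rw [← exp_add]; ring_nf
    linear_combination h1 + c ^ 2 * h2 + 2 * c * h3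
  have h2α : 2 * α ≠ 0 := mul_ne_zero two_ne_zero hα
  simp only [hsq]
  rw [intervalIntegral.integral_add, intervalIntegral.integral_add,
    intervalIntegral.integral_const_mul, integral_exp_mul (by simpa using h2α),
    integral_exp_mul h2α, intervalIntegral.integral_const]
  · have hq : exp (-α * T) ≠ 0 := (exp_pos _).ne'
    have h2 : exp (-2 * α * T) = exp (-α * T) ^ 2 := by rw [sq, ← exp_add]; ring_nf
    have h2' : exp (2 * α * T) = (exp (-α * T))⁻¹ ^ 2 := by
      rw [← exp_neg, sq, ← exp_add]; ring_nf
    have hs : sinh (α * T) = ((exp (-α * T))⁻¹ - exp (-α * T)) / 2 := by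
      rw [sinh_eq, ← exp_neg]; ring_nf
    simp only [h2, h2', hs, mul_zero, exp_zero, sub_zero, smul_eq_mul]
    field_simp
    ring
  all_goals exact Continuous.intervalIntegrable (by fun_prop) _ _

theorem integral_antisymmetricMode_sq {α : ℝ} (hα : α ≠ 0) (T : ℝ) :
    ∫ t in (0:ℝ)..T, antisymmetricMode α T t ^ 2
      = 2 * exp (-α * T) * (sinh (α * T) - α * T) / α := by
  have h := integral_exp_add_mul_exp_sq hα T (-1)
  simp only [neg_one_mul, ← sub_eq_add_neg] at h
  unfold antisymmetricMode
  rw [h]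
  ring

theorem integral_deriv_antisymmetricMode_sq {α : ℝ} (hα : α ≠ 0) (T : ℝ) :
    ∫ t in (0:ℝ)..T, deriv (antisymmetricMode α T) t ^ 2
      = 2 * α * exp (-α * T) * (sinh (α * T) + α * T) := by
  simp only [fun t => (hasDerivAt_antisymmetricMode α T t).deriv, mul_pow,
    intervalIntegral.integral_const_mul]
  have h := integral_exp_add_mul_exp_sq hα T 1
  simp only [one_mul] at h
  rw [h]
  field_simp
  ring

theorem integral_deriv_antisymmetricMode_sq_eq {α T : ℝ} (hαT : α * T ≠ 0) :
    ∫ t in (0:ℝ)..T, deriv (antisymmetricMode α T) t ^ 2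
      = α ^ 2 * ((sinh (α * T) + α * T) / (sinh (α * T) - α * T))
        * ∫ t in (0:ℝ)..T, antisymmetricMode α T t ^ 2 := by
  have hα : α ≠ 0 := left_ne_zero_of_mul hαT
  rw [integral_antisymmetricMode_sq hα, integral_deriv_antisymmetricMode_sq hα]
  field_simp [sinh_sub_self_ne_zero hαT]

/-- For `T > 0`, `β > 0` and `α ≥ β/T`, the antisymmetric mode
`u(t) = e^{−αt} − e^{−α(T−t)}` satisfies
`∫₀^T u′(t)² dt ≤ α² (sinh β + β)/(sinh β − β) ∫₀^T u(t)² dt`. -/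
theorem antisymmetric_mode_energy_bound (T β α : ℝ) (hT : 0 < T) (hβ : 0 < β)
    (hα : β / T ≤ α)
    (u : ℝ → ℝ) (hu : u = fun t => Real.exp (-α*t) - Real.exp (-α*(T-t))) :
    ∫ t in (0:ℝ)..T, (deriv u t)^2
      ≤ α^2 * ((Real.sinh β + β) / (Real.sinh β - β))
        * ∫ t in (0:ℝ)..T, (u t)^2 := by
  obtain rfl : u = antisymmetricMode α T := hu
  have hβαT : β ≤ α * T := (div_le_iff₀ hT).1 hα
  rw [integral_deriv_antisymmetricMode_sq_eq (hβ.trans_le hβαT).ne']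
  gcongr α ^ 2 * ?_ * _
  · exact intervalIntegral.integral_nonneg hT.le fun t _ => sq_nonneg _
  · exact sinh_add_self_div_sinh_sub_self_antitoneOn hβ (hβ.trans_le hβαT) hβαT
end

section
/- Let T > 0 and α ≥ 2/T, and let u(t) = e^{−αt} + e^{−α(T−t)} be the symmetric mode. Then there exist continuous functions v, w : [0,T] → ℝ and a finite set S ⊂ (0,T) such that: v(0) = v(T) = w(0) = w(T) = 0; for every t ∈ (0,T) \ S, v is differentiable at t with v′(t) = u(t) − w(t) and w is differentiable at t; and, denoting by w′ the (a.e. defined) derivative of w, the following bounds hold: ∫₀^T v(t)² dt ≤ (1/(30α²)) ∫₀^T u(t)² dt; ∫₀^T (u(t) − w(t))² dt ≤ (1 + 1/√3)² ∫₀^T u(t)² dt; ∫₀^T w(t)² dt ≤ (1 + 1/√3)² ∫₀^T u(t)² dt; and ∫₀^T w′(t)² dt ≤ α² (5 + √2)² ∫₀^T u(t)² dt. -/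
/-!
Near each endpoint `u` is corrected by a boundary layer of width `1/(2α)` built from the profile
`p(s) = s (1 - s)³`, for which `p(0) = 0`, `p'(0) = 1` and `p(1) = p'(1) = 0`. With
`A = u(0) = u(T)`, the function `v(t) = A/(2α) · (p(2αt) - p(2α(T - t)))` has `v̇ = A` at both
endpoints, so `w = u - v̇` vanishes there. The two layers have disjoint supports, so the `L²` norms
of `v`, `u - w` and of the layer part of `ẇ` are explicit polynomial integrals times powers of `A`
and `α`. Since `αT ≥ 2`, `e^{-αT} ≤ 1/7`, which together with `∫ u² ≥ (1 - e^{-2αT}) / α` gives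
`A² ≤ (4/3) α ∫ u²`; this compares every correction with `∫ u²`. The bounds on `w` and `ẇ` then
follow from the triangle inequality in `L²`, using `∫ u̇² ≤ α² ∫ u²` for the derivative.
-/

open Real MeasureTheory intervalIntegral

noncomputable section

theorem integral_sq_add_le_of_integral_sq_le {f g : ℝ → ℝ} {a b c d X : ℝ} (hab : a ≤ b)
    (hf : Continuous f) (hg : Continuous g) (hc : 0 < c) (hd : 0 < d)
    (hfX : ∫ x in a..b, f x ^ 2 ≤ c ^ 2 * X) (hgX : ∫ x in a..b, g x ^ 2 ≤ d ^ 2 * X) :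
    ∫ x in a..b, (f x + g x) ^ 2 ≤ (c + d) ^ 2 * X := by
  -- Young's inequality with weight `d / c`, which is optimal for these bounds.
  have young : ∀ x, (f x + g x) ^ 2 ≤ (1 + d / c) * f x ^ 2 + (1 + c / d) * g x ^ 2 := by
    intro x
    have key : 0 ≤ (d * f x - c * g x) ^ 2 / (c * d) := by positivity
    have expand : (1 + d / c) * f x ^ 2 + (1 + c / d) * g x ^ 2 - (f x + g x) ^ 2
        = (d * f x - c * g x) ^ 2 / (c * d) := by
      field_simp
      ring
    linarith
  calc ∫ x in a..b, (f x + g x) ^ 2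
      ≤ ∫ x in a..b, ((1 + d / c) * f x ^ 2 + (1 + c / d) * g x ^ 2) :=
        integral_mono_on hab ((by fun_prop : Continuous _).intervalIntegrable _ _)
          ((by fun_prop : Continuous _).intervalIntegrable _ _) fun x _ => young x
    _ = (1 + d / c) * (∫ x in a..b, f x ^ 2) + (1 + c / d) * ∫ x in a..b, g x ^ 2 := by
        rw [integral_add ((by fun_prop : Continuous _).intervalIntegrable _ _)
          ((by fun_prop : Continuous _).intervalIntegrable _ _),
          intervalIntegral.integral_const_mul, intervalIntegral.integral_const_mul]
    _ ≤ (1 + d / c) * (c ^ 2 * X) + (1 + c / d) * (d ^ 2 * X) := by gcongr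
    _ = (c + d) ^ 2 * X := by field_simp; ring

def cutoff (p : ℝ → ℝ) (s : ℝ) : ℝ := if s ≤ 1 then p s else 0

section Cutoff

variable {p p' : ℝ → ℝ}

theorem cutoff_of_one_le (hp : p 1 = 0) {s : ℝ} (hs : 1 ≤ s) : cutoff p s = 0 := by
  rcases hs.eq_or_lt with rfl | hs
  · simp [cutoff, hp]
  · simp [cutoff, not_le.2 hs]

theorem continuous_cutoff (hp : Continuous p) (hp1 : p 1 = 0) : Continuous (cutoff p) :=
  Continuous.if_le hp continuous_const continuous_id continuous_const fun _ hs => hs ▸ hp1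

theorem hasDerivAt_cutoff (hp : ∀ s, HasDerivAt p (p' s) s) {s : ℝ} (hs : s ≠ 1) :
    HasDerivAt (cutoff p) (cutoff p' s) s := by
  rcases hs.lt_or_gt with hs | hs
  · refine ((hp s).congr_of_eventuallyEq ?_).congr_deriv (if_pos hs.le).symm
    filter_upwards [Iio_mem_nhds hs] with r hr using if_pos (le_of_lt hr)
  · refine ((hasDerivAt_const s 0).congr_of_eventuallyEq ?_).congr_deriv
      (if_neg (not_le.2 hs)).symm
    filter_upwards [Ioi_mem_nhds hs] with r hr using if_neg (not_le.2 hr)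

theorem integral_sq_cutoff_comp_mul (hp : Continuous p) (hp1 : p 1 = 0) {a T : ℝ}
    (ha : 0 < a) (haT : 1 ≤ a * T) :
    ∫ t in (0:ℝ)..T, cutoff p (a * t) ^ 2 = a⁻¹ * ∫ s in (0:ℝ)..1, p s ^ 2 := by
  have hint : ∀ b c : ℝ, IntervalIntegrable (fun s => cutoff p s ^ 2) volume b c := fun _ _ =>
    ((continuous_cutoff hp hp1).pow 2).intervalIntegrable _ _
  have tail : ∫ s in (1:ℝ)..a * T, cutoff p s ^ 2 = 0 := by
    rw [integral_congr (g := fun _ => 0) fun s hs => ?_, intervalIntegral.integral_zero]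
    rw [Set.uIcc_of_le haT] at hs
    simp [cutoff_of_one_le hp1 hs.1]
  have head : ∫ s in (0:ℝ)..1, cutoff p s ^ 2 = ∫ s in (0:ℝ)..1, p s ^ 2 :=
    integral_congr fun s hs => by
      rw [Set.uIcc_of_le zero_le_one] at hs
      simp [cutoff, hs.2]
  rw [integral_comp_mul_left (fun s => cutoff p s ^ 2) ha.ne', mul_zero,
    ← integral_add_adjacent_intervals (hint 0 1) (hint 1 _), tail, add_zero, head, smul_eq_mul]

end Cutoff

def boundaryLayer (p : ℝ → ℝ) (a T c t : ℝ) : ℝ :=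
  cutoff p (a * t) + c * cutoff p (a * (T - t))

section BoundaryLayer

variable {p p' : ℝ → ℝ} {a T : ℝ}

theorem boundaryLayer_zero (hp1 : p 1 = 0) (haT : 1 ≤ a * T) (c : ℝ) :
    boundaryLayer p a T c 0 = p 0 := by
  rw [boundaryLayer, mul_zero, sub_zero, cutoff_of_one_le hp1 haT]
  simp [cutoff]

theorem boundaryLayer_self (hp1 : p 1 = 0) (haT : 1 ≤ a * T) (c : ℝ) :
    boundaryLayer p a T c T = c * p 0 := by
  rw [boundaryLayer, sub_self, mul_zero, cutoff_of_one_le hp1 haT]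
  simp [cutoff]

theorem continuous_boundaryLayer (hp : Continuous p) (hp1 : p 1 = 0) (c : ℝ) :
    Continuous (boundaryLayer p a T c) := by
  have := continuous_cutoff hp hp1
  unfold boundaryLayer
  fun_prop

theorem hasDerivAt_boundaryLayer (hp : ∀ s, HasDerivAt p (p' s) s) (c : ℝ) {t : ℝ}
    (h₀ : t ≠ a⁻¹) (h₁ : t ≠ T - a⁻¹) :
    HasDerivAt (boundaryLayer p a T c) (a * boundaryLayer p' a T (-c) t) t := by
  have k₀ : a * t ≠ 1 := fun h => h₀ (eq_inv_of_mul_eq_one_right h)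
  have k₁ : a * (T - t) ≠ 1 := fun h => h₁ (by rw [← eq_inv_of_mul_eq_one_right h]; ring)
  have d₀ := (hasDerivAt_cutoff hp k₀).comp t ((hasDerivAt_id' t).const_mul a)
  have d₁ := (hasDerivAt_cutoff hp k₁).comp t (((hasDerivAt_id' t).const_sub T).const_mul a)
  exact (d₀.add (d₁.const_mul c)).congr_deriv (by simp only [boundaryLayer]; ring)

theorem integral_sq_boundaryLayer (hp : Continuous p) (hp1 : p 1 = 0) (ha : 0 < a)
    (haT : 2 ≤ a * T) (c : ℝ) :
    ∫ t in (0:ℝ)..T, boundaryLayer p a T c t ^ 2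
      = (1 + c ^ 2) / a * ∫ s in (0:ℝ)..1, p s ^ 2 := by
  have hc := continuous_cutoff hp hp1
  have disjoint : ∀ t, cutoff p (a * t) * cutoff p (a * (T - t)) = 0 := fun t => by
    rcases le_total 1 (a * t) with h | h
    · rw [cutoff_of_one_le hp1 h, zero_mul]
    · rw [cutoff_of_one_le (s := a * (T - t)) hp1 (by rw [mul_sub]; linarith), mul_zero]
  have reflect : ∫ t in (0:ℝ)..T, cutoff p (a * (T - t)) ^ 2
      = ∫ t in (0:ℝ)..T, cutoff p (a * t) ^ 2 := by
    simpa using integral_comp_sub_left (fun t => cutoff p (a * t) ^ 2) T (a := 0) (b := T)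
  have split : ∀ t, boundaryLayer p a T c t ^ 2
      = cutoff p (a * t) ^ 2 + c ^ 2 * cutoff p (a * (T - t)) ^ 2 := fun t => by
    simp only [boundaryLayer]
    linear_combination 2 * c * disjoint t
  simp_rw [split]
  rw [integral_add ((by fun_prop : Continuous _).intervalIntegrable _ _)
    ((by fun_prop : Continuous _).intervalIntegrable _ _), intervalIntegral.integral_const_mul,
    reflect, integral_sq_cutoff_comp_mul hp hp1 ha (by linarith)]
  ring

end BoundaryLayer

def profile (s : ℝ) : ℝ := s * (1 - s) ^ 3
def profile' (s : ℝ) : ℝ := (1 - s) ^ 2 * (1 - 4 * s)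
def profile'' (s : ℝ) : ℝ := -6 * (1 - s) * (1 - 2 * s)

theorem continuous_profile : Continuous profile := by unfold profile; fun_prop

theorem continuous_profile' : Continuous profile' := by unfold profile'; fun_prop

theorem continuous_profile'' : Continuous profile'' := by unfold profile''; fun_prop

theorem profile_one : profile 1 = 0 := by norm_num [profile]

theorem profile'_one : profile' 1 = 0 := by norm_num [profile']

theorem profile''_one : profile'' 1 = 0 := by norm_num [profile'']

theorem hasDerivAt_profile (s : ℝ) : HasDerivAt profile (profile' s) s := by
  have h := (hasDerivAt_id' s).mul (((hasDerivAt_id' s).const_sub 1).pow 3)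
  exact h.congr_deriv (by simp only [profile', Pi.pow_apply]; push_cast; ring)

theorem hasDerivAt_profile' (s : ℝ) : HasDerivAt profile' (profile'' s) s := by
  have h := (((hasDerivAt_id' s).const_sub 1).pow 2).mul
    (((hasDerivAt_id' s).const_mul 4).const_sub 1)
  exact h.congr_deriv (by simp only [profile'', Pi.pow_apply]; push_cast; ring)

theorem integral_sq_profile : ∫ s in (0:ℝ)..1, profile s ^ 2 = 1 / 252 := by
  simp only [profile]
  ring_nf
  simp (disch := exact (Continuous.intervalIntegrable (by fun_prop) _ _)) only
    [intervalIntegral.integral_add, intervalIntegral.integral_sub, integral_pow,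
      intervalIntegral.integral_mul_const]
  norm_num

theorem integral_sq_profile' : ∫ s in (0:ℝ)..1, profile' s ^ 2 = 3 / 35 := by
  simp only [profile']
  ring_nf
  simp (disch := exact (Continuous.intervalIntegrable (by fun_prop) _ _)) only
    [intervalIntegral.integral_add, intervalIntegral.integral_sub, integral_pow,
      intervalIntegral.integral_mul_const, intervalIntegral.integral_const, integral_id]
  norm_num

theorem integral_sq_profile'' : ∫ s in (0:ℝ)..1, profile'' s ^ 2 = 24 / 5 := by
  simp only [profile'']
  ring_nf
  simp (disch := exact (Continuous.intervalIntegrable (by fun_prop) _ _)) only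
    [intervalIntegral.integral_add, intervalIntegral.integral_sub, integral_pow,
      intervalIntegral.integral_mul_const, intervalIntegral.integral_const, integral_id]
  norm_num

def symmetricMode (α T t : ℝ) : ℝ := exp (-α * t) + exp (-α * (T - t))

def symmetricMode' (α T t : ℝ) : ℝ := α * (exp (-α * (T - t)) - exp (-α * t))

section SymmetricMode

variable {α T : ℝ}

@[fun_prop]
theorem continuous_symmetricMode : Continuous (symmetricMode α T) := by
  unfold symmetricMode; fun_prop

@[fun_prop]
theorem continuous_symmetricMode' : Continuous (symmetricMode' α T) := by
  unfold symmetricMode'; fun_prop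

theorem hasDerivAt_symmetricMode (t : ℝ) :
    HasDerivAt (symmetricMode α T) (symmetricMode' α T t) t := by
  have e₀ := ((hasDerivAt_id' t).const_mul (-α)).exp
  have e₁ := (((hasDerivAt_id' t).const_sub T).const_mul (-α)).exp
  exact (e₀.add e₁).congr_deriv (by simp only [symmetricMode']; ring)

theorem symmetricMode_zero : symmetricMode α T 0 = 1 + exp (-α * T) := by
  simp [symmetricMode]

theorem symmetricMode_self : symmetricMode α T T = 1 + exp (-α * T) := by
  simp [symmetricMode, add_comm]

theorem sq_symmetricMode'_le (t : ℝ) :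
    symmetricMode' α T t ^ 2 ≤ α ^ 2 * symmetricMode α T t ^ 2 := by
  -- `u̇²` and `α² u²` differ only in the sign of the positive cross term.
  have := mul_pos (exp_pos (-α * t)) (exp_pos (-α * (T - t)))
  simp only [symmetricMode, symmetricMode']
  nlinarith [sq_nonneg α]

theorem integral_sq_symmetricMode'_le (hT : 0 ≤ T) :
    ∫ t in (0:ℝ)..T, symmetricMode' α T t ^ 2
      ≤ α ^ 2 * ∫ t in (0:ℝ)..T, symmetricMode α T t ^ 2 := by
  rw [← intervalIntegral.integral_const_mul]
  exact integral_mono_on hT ((by fun_prop : Continuous _).intervalIntegrable _ _)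
    ((by fun_prop : Continuous _).intervalIntegrable _ _) fun t _ => sq_symmetricMode'_le t

theorem integral_exp_neg_mul (hα : α ≠ 0) :
    ∫ t in (0:ℝ)..T, exp (-α * t) = (1 - exp (-α * T)) / α := by
  rw [integral_comp_mul_left exp (neg_ne_zero.2 hα), integral_exp, mul_zero, exp_zero,
    smul_eq_mul]
  field_simp
  ring

theorem integral_sq_symmetricMode_ge (hα : 0 < α) (hT : 0 ≤ T) :
    (1 - exp (-α * T) ^ 2) / α ≤ ∫ t in (0:ℝ)..T, symmetricMode α T t ^ 2 := by
  have hsq : ∀ t, exp (-α * t) ^ 2 = exp (-(2 * α) * t) := fun t => by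
    rw [← exp_nat_mul]; ring_nf
  have reflect :
      ∫ t in (0:ℝ)..T, exp (-α * (T - t)) ^ 2 = ∫ t in (0:ℝ)..T, exp (-α * t) ^ 2 := by
    simpa using integral_comp_sub_left (fun t => exp (-α * t) ^ 2) T (a := 0) (b := T)
  have pointwise : ∀ t, exp (-α * t) ^ 2 + exp (-α * (T - t)) ^ 2 ≤ symmetricMode α T t ^ 2 :=
    fun t => by
      have := mul_pos (exp_pos (-α * t)) (exp_pos (-α * (T - t)))
      simp only [symmetricMode]
      nlinarith
  calc (1 - exp (-α * T) ^ 2) / α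
      = ∫ t in (0:ℝ)..T, (exp (-α * t) ^ 2 + exp (-α * (T - t)) ^ 2) := by
        rw [intervalIntegral.integral_add ((by fun_prop : Continuous _).intervalIntegrable _ _)
          ((by fun_prop : Continuous _).intervalIntegrable _ _), reflect]
        simp only [hsq]
        rw [integral_exp_neg_mul (by positivity)]
        field_simp
        ring
    _ ≤ ∫ t in (0:ℝ)..T, symmetricMode α T t ^ 2 :=
        integral_mono_on hT ((by fun_prop : Continuous _).intervalIntegrable _ _)
          ((by fun_prop : Continuous _).intervalIntegrable _ _) fun t _ => pointwise t

/-- Since `αT ≥ 2`, `q = exp (-αT) ≤ 1/7`, so `(1 + q)² ≤ (4/3) (1 - q²)`. -/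
theorem sq_symmetricMode_zero_le (hα : 0 < α) (hαT : 2 ≤ α * T) :
    symmetricMode α T 0 ^ 2 ≤ 4 / 3 * α * ∫ t in (0:ℝ)..T, symmetricMode α T t ^ 2 := by
  have hT : 0 ≤ T := by nlinarith
  have hq : exp (-α * T) ≤ 1 / 7 := by
    have h2 : (7:ℝ) ≤ exp 2 := by
      have : exp 2 = exp 1 ^ 2 := by rw [← exp_nat_mul]; norm_num
      nlinarith [exp_one_gt_d9]
    calc exp (-α * T) ≤ exp (-2) := exp_le_exp.2 (by linarith)
      _ = (exp 2)⁻¹ := exp_neg 2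
      _ ≤ 1 / 7 := by rw [inv_le_comm₀ (by positivity) (by norm_num)]; simpa using h2
  have hq0 := exp_pos (-α * T)
  calc symmetricMode α T 0 ^ 2 = (1 + exp (-α * T)) ^ 2 := by rw [symmetricMode_zero]
    _ ≤ 4 / 3 * α * ((1 - exp (-α * T) ^ 2) / α) := by
        rw [mul_assoc, mul_div_cancel₀ _ hα.ne']
        nlinarith
    _ ≤ 4 / 3 * α * ∫ t in (0:ℝ)..T, symmetricMode α T t ^ 2 := by
        gcongr
        exact integral_sq_symmetricMode_ge hα hT

def symmetricModeV (α T t : ℝ) : ℝ :=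
  symmetricMode α T 0 / (2 * α) * boundaryLayer profile (2 * α) T (-1) t

def symmetricModeW (α T t : ℝ) : ℝ :=
  symmetricMode α T t - symmetricMode α T 0 * boundaryLayer profile' (2 * α) T 1 t

def symmetricModeW' (α T t : ℝ) : ℝ :=
  symmetricMode' α T t - symmetricMode α T 0 * (2 * α) * boundaryLayer profile'' (2 * α) T (-1) t

section Decomposition

variable {α T : ℝ}

theorem continuous_symmetricModeV : Continuous (symmetricModeV α T) :=
  continuous_const.mul (continuous_boundaryLayer continuous_profile profile_one _)

theorem continuous_symmetricModeW : Continuous (symmetricModeW α T) :=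
  continuous_symmetricMode.sub
    (continuous_const.mul (continuous_boundaryLayer continuous_profile' profile'_one _))

theorem symmetricModeV_zero (hαT : 1 ≤ 2 * α * T) : symmetricModeV α T 0 = 0 := by
  simp [symmetricModeV, boundaryLayer_zero profile_one hαT, profile]

theorem symmetricModeV_self (hαT : 1 ≤ 2 * α * T) : symmetricModeV α T T = 0 := by
  simp [symmetricModeV, boundaryLayer_self profile_one hαT, profile]

theorem symmetricModeW_zero (hαT : 1 ≤ 2 * α * T) : symmetricModeW α T 0 = 0 := by
  simp [symmetricModeW, boundaryLayer_zero profile'_one hαT, profile']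

theorem symmetricModeW_self (hαT : 1 ≤ 2 * α * T) : symmetricModeW α T T = 0 := by
  simp [symmetricModeW, boundaryLayer_self profile'_one hαT, profile', symmetricMode_self,
    symmetricMode_zero]

theorem hasDerivAt_symmetricModeV (hα : α ≠ 0) {t : ℝ} (h₀ : t ≠ (2 * α)⁻¹)
    (h₁ : t ≠ T - (2 * α)⁻¹) :
    HasDerivAt (symmetricModeV α T) (symmetricMode α T t - symmetricModeW α T t) t := by
  refine ((hasDerivAt_boundaryLayer hasDerivAt_profile (-1) h₀ h₁).const_mul _).congr_deriv ?_
  simp only [symmetricModeW, neg_neg]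
  field_simp
  ring

theorem hasDerivAt_symmetricModeW {t : ℝ} (h₀ : t ≠ (2 * α)⁻¹) (h₁ : t ≠ T - (2 * α)⁻¹) :
    HasDerivAt (symmetricModeW α T) (symmetricModeW' α T t) t := by
  refine ((hasDerivAt_symmetricMode t).sub
    ((hasDerivAt_boundaryLayer hasDerivAt_profile' 1 h₀ h₁).const_mul _)).congr_deriv ?_
  simp only [symmetricModeW']
  ring

end Decomposition

section Estimates

variable {α T : ℝ}

theorem integral_sq_symmetricModeV_le (hα : 0 < α) (hαT : 2 ≤ α * T) :
    ∫ t in (0:ℝ)..T, symmetricModeV α T t ^ 2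
      ≤ 1 / (30 * α ^ 2) * ∫ t in (0:ℝ)..T, symmetricMode α T t ^ 2 := by
  have hA := sq_symmetricMode_zero_le hα hαT
  have hX : 0 ≤ ∫ t in (0:ℝ)..T, symmetricMode α T t ^ 2 :=
    intervalIntegral.integral_nonneg (by nlinarith) fun t _ => sq_nonneg _
  simp_rw [symmetricModeV, mul_pow]
  rw [intervalIntegral.integral_const_mul,
    integral_sq_boundaryLayer continuous_profile profile_one (by positivity) (by linarith),
    integral_sq_profile]
  calc (symmetricMode α T 0 / (2 * α)) ^ 2 * ((1 + (-1) ^ 2) / (2 * α) * (1 / 252))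
      = symmetricMode α T 0 ^ 2 / (1008 * α ^ 3) := by field_simp; ring
    _ ≤ 4 / 3 * α * (∫ t in (0:ℝ)..T, symmetricMode α T t ^ 2) / (1008 * α ^ 3) := by gcongr
    _ = 1 / (756 * α ^ 2) * ∫ t in (0:ℝ)..T, symmetricMode α T t ^ 2 := by field_simp; ring
    _ ≤ 1 / (30 * α ^ 2) * ∫ t in (0:ℝ)..T, symmetricMode α T t ^ 2 := by gcongr; norm_num

theorem integral_sq_sub_symmetricModeW_le (hα : 0 < α) (hαT : 2 ≤ α * T) :
    ∫ t in (0:ℝ)..T, (symmetricMode α T t - symmetricModeW α T t) ^ 2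
      ≤ (1 / √3) ^ 2 * ∫ t in (0:ℝ)..T, symmetricMode α T t ^ 2 := by
  have hA := sq_symmetricMode_zero_le hα hαT
  have hX : 0 ≤ ∫ t in (0:ℝ)..T, symmetricMode α T t ^ 2 :=
    intervalIntegral.integral_nonneg (by nlinarith) fun t _ => sq_nonneg _
  simp_rw [symmetricModeW, sub_sub_cancel, mul_pow]
  rw [intervalIntegral.integral_const_mul,
    integral_sq_boundaryLayer continuous_profile' profile'_one (by positivity) (by linarith),
    integral_sq_profile', div_pow, sq_sqrt zero_le_three]
  calc symmetricMode α T 0 ^ 2 * ((1 + 1 ^ 2) / (2 * α) * (3 / 35))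
      = symmetricMode α T 0 ^ 2 * 3 / (35 * α) := by field_simp; ring
    _ ≤ 4 / 3 * α * (∫ t in (0:ℝ)..T, symmetricMode α T t ^ 2) * 3 / (35 * α) := by gcongr
    _ = 4 / 35 * ∫ t in (0:ℝ)..T, symmetricMode α T t ^ 2 := by field_simp
    _ ≤ 1 ^ 2 / 3 * ∫ t in (0:ℝ)..T, symmetricMode α T t ^ 2 :=
        mul_le_mul_of_nonneg_right (by norm_num) hX

theorem integral_sq_symmetricModeW_le (hα : 0 < α) (hαT : 2 ≤ α * T) :
    ∫ t in (0:ℝ)..T, symmetricModeW α T t ^ 2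
      ≤ (1 + 1 / √3) ^ 2 * ∫ t in (0:ℝ)..T, symmetricMode α T t ^ 2 := by
  have hcorr : ∫ t in (0:ℝ)..T, (-(symmetricMode α T t - symmetricModeW α T t)) ^ 2
      ≤ (1 / √3) ^ 2 * ∫ t in (0:ℝ)..T, symmetricMode α T t ^ 2 := by
    simpa only [neg_sq] using integral_sq_sub_symmetricModeW_le hα hαT
  calc ∫ t in (0:ℝ)..T, symmetricModeW α T t ^ 2
      = ∫ t in (0:ℝ)..T,
          (symmetricMode α T t + -(symmetricMode α T t - symmetricModeW α T t)) ^ 2 := by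
        congr 1; ext t; ring
    _ ≤ (1 + 1 / √3) ^ 2 * ∫ t in (0:ℝ)..T, symmetricMode α T t ^ 2 :=
        integral_sq_add_le_of_integral_sq_le (by nlinarith) continuous_symmetricMode
          (continuous_symmetricMode.sub continuous_symmetricModeW).neg one_pos (by positivity)
          (by rw [one_pow, one_mul]) hcorr

theorem integral_sq_symmetricModeW'_le (hα : 0 < α) (hαT : 2 ≤ α * T) :
    ∫ t in (0:ℝ)..T, symmetricModeW' α T t ^ 2
      ≤ α ^ 2 * (5 + √2) ^ 2 * ∫ t in (0:ℝ)..T, symmetricMode α T t ^ 2 := by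
  have hA := sq_symmetricMode_zero_le hα hαT
  have hX : 0 ≤ ∫ t in (0:ℝ)..T, symmetricMode α T t ^ 2 :=
    intervalIntegral.integral_nonneg (by nlinarith) fun t _ => sq_nonneg _
  have hcorr : ∫ t in (0:ℝ)..T,
      (-(symmetricMode α T 0 * (2 * α) * boundaryLayer profile'' (2 * α) T (-1) t)) ^ 2
      ≤ ((4 + √2) * α) ^ 2 * ∫ t in (0:ℝ)..T, symmetricMode α T t ^ 2 := by
    simp_rw [neg_sq, mul_pow]
    rw [intervalIntegral.integral_const_mul,
      integral_sq_boundaryLayer continuous_profile'' profile''_one (by positivity) (by linarith),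
      integral_sq_profile'']
    have h2 : (128 / 5 : ℝ) ≤ (4 + √2) ^ 2 := by
      nlinarith [sq_sqrt (zero_le_two : (0:ℝ) ≤ 2), sqrt_nonneg 2]
    calc _ = symmetricMode α T 0 ^ 2 * (96 / 5 * α) := by field_simp; ring
      _ ≤ 4 / 3 * α * (∫ t in (0:ℝ)..T, symmetricMode α T t ^ 2) * (96 / 5 * α) := by gcongr
      _ = 128 / 5 * α ^ 2 * ∫ t in (0:ℝ)..T, symmetricMode α T t ^ 2 := by ring
      _ ≤ (4 + √2) ^ 2 * α ^ 2 * ∫ t in (0:ℝ)..T, symmetricMode α T t ^ 2 := by gcongr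
  calc ∫ t in (0:ℝ)..T, symmetricModeW' α T t ^ 2
      = ∫ t in (0:ℝ)..T, (symmetricMode' α T t
          + -(symmetricMode α T 0 * (2 * α) * boundaryLayer profile'' (2 * α) T (-1) t)) ^ 2 := by
        simp only [symmetricModeW', sub_eq_add_neg]
    _ ≤ (α + (4 + √2) * α) ^ 2 * ∫ t in (0:ℝ)..T, symmetricMode α T t ^ 2 :=
        integral_sq_add_le_of_integral_sq_le (by nlinarith) continuous_symmetricMode'
          (continuous_const.mul (continuous_boundaryLayer continuous_profile'' profile''_one _)).neg
          hα (by positivity) (integral_sq_symmetricMode'_le (by nlinarith)) hcorr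
    _ = α ^ 2 * (5 + √2) ^ 2 * ∫ t in (0:ℝ)..T, symmetricMode α T t ^ 2 := by ring

end Estimates

/-- Decomposition `u = v̇ + w` with Dirichlet boundary conditions in time for high
symmetric modes `u(t) = e^{−αt} + e^{−α(T−t)}` with `α ≥ 2/T`, together with the
quantitative `L²` bounds of Case 4 of the divergence lemma. -/
theorem symmetric_mode_decomposition (T α : ℝ) (hT : 0 < T) (hα : 2/T ≤ α)
    (u : ℝ → ℝ) (hu : u = fun t => Real.exp (-α*t) + Real.exp (-α*(T-t))) :
    ∃ (v w : ℝ → ℝ) (S : Finset ℝ), ↑S ⊆ Set.Ioo (0:ℝ) T ∧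
      ContinuousOn v (Set.Icc 0 T) ∧ ContinuousOn w (Set.Icc 0 T) ∧
      v 0 = 0 ∧ v T = 0 ∧ w 0 = 0 ∧ w T = 0 ∧
      (∀ t ∈ Set.Ioo (0:ℝ) T \ ↑S,
        HasDerivAt v (u t - w t) t ∧ DifferentiableAt ℝ w t) ∧
      (∫ t in (0:ℝ)..T, (v t)^2)
        ≤ 1/(30*α^2) * ∫ t in (0:ℝ)..T, (u t)^2 ∧
      (∫ t in (0:ℝ)..T, (u t - w t)^2)
        ≤ (1 + 1/Real.sqrt 3)^2 * ∫ t in (0:ℝ)..T, (u t)^2 ∧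
      (∫ t in (0:ℝ)..T, (w t)^2)
        ≤ (1 + 1/Real.sqrt 3)^2 * ∫ t in (0:ℝ)..T, (u t)^2 ∧
      (∫ t in (0:ℝ)..T, (deriv w t)^2)
        ≤ α^2 * (5 + Real.sqrt 2)^2 * ∫ t in (0:ℝ)..T, (u t)^2 := by
  obtain rfl : u = symmetricMode α T := hu
  have hα0 : 0 < α := (by positivity : (0:ℝ) < 2 / T).trans_le hα
  have hαT : 2 ≤ α * T := by rwa [div_le_iff₀ hT] at hα
  have h2αT : 1 ≤ 2 * α * T := by linarith
  have hδ : (2 * α)⁻¹ ≤ T / 4 := by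
    rw [inv_le_iff_one_le_mul₀ (by positivity)]; linarith
  set S : Finset ℝ := {(2 * α)⁻¹, T - (2 * α)⁻¹}
  have hS : ↑S ⊆ Set.Ioo (0:ℝ) T := by
    have : 0 < (2 * α)⁻¹ := by positivity
    simp only [S, Finset.coe_insert, Finset.coe_singleton, Set.insert_subset_iff,
      Set.singleton_subset_iff, Set.mem_Ioo]
    constructor <;> constructor <;> linarith
  have hderiv : ∀ t ∉ S, HasDerivAt (symmetricModeV α T)
      (symmetricMode α T t - symmetricModeW α T t) t ∧
      HasDerivAt (symmetricModeW α T) (symmetricModeW' α T t) t := fun t ht => by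
    simp only [S, Finset.mem_insert, Finset.mem_singleton, not_or] at ht
    exact ⟨hasDerivAt_symmetricModeV hα0.ne' ht.1 ht.2, hasDerivAt_symmetricModeW ht.1 ht.2⟩
  have hdW : ∫ t in (0:ℝ)..T, deriv (symmetricModeW α T) t ^ 2
      = ∫ t in (0:ℝ)..T, symmetricModeW' α T t ^ 2 :=
    integral_congr_ae <| (S.finite_toSet.countable.ae_notMem volume).mono fun t ht _ => by
      rw [(hderiv t ht).2.deriv]
  refine ⟨symmetricModeV α T, symmetricModeW α T, S, hS,
    continuous_symmetricModeV.continuousOn, continuous_symmetricModeW.continuousOn,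
    symmetricModeV_zero h2αT, symmetricModeV_self h2αT, symmetricModeW_zero h2αT,
    symmetricModeW_self h2αT,
    fun t ht => ⟨(hderiv t ht.2).1, (hderiv t ht.2).2.differentiableAt⟩,
    integral_sq_symmetricModeV_le hα0 hαT, ?_, integral_sq_symmetricModeW_le hα0 hαT,
    hdW ▸ integral_sq_symmetricModeW'_le hα0 hαT⟩
  refine (integral_sq_sub_symmetricModeW_le hα0 hαT).trans (mul_le_mul_of_nonneg_right ?_
    (intervalIntegral.integral_nonneg hT.le fun t _ => sq_nonneg _))
  gcongr
  linarith [(by positivity : (0:ℝ) ≤ 1 / √3)]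
end SymmetricMode
end
end
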